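/- Let $x_t$ solve $\dot x_t = (A - \tfrac{1}{2}\Sigma_t H^\top H) x_t$, where $\Sigma_t$ is a continuous path of positive definite matrices satisfying $\|\Sigma_t - \Sigma_\infty\|_2 \le M_1 e^{-\beta t}$, and suppose $\|e^{t(A - \frac{1}{2}\Sigma_\infty H^\top H)}\|_2 \le \sqrt{c}\, e^{-\beta t}$ for all $t \ge 0$ with $c \ge 1$. Then $|x_t| \le \alpha e^{-\beta t}|x_0|$ where $\alpha = \sqrt{c}\, e^{\sqrt{c} M_1 \|H^\top H\|_2 / (2\beta)}$. -/

import Mathlib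

/-!
Write the generator as `L + P t` with `L = A - ½ Σ∞ HᵀH` and the perturbation
`P t = -½ (Σ_t - Σ∞) HᵀH`, so `‖e^{tL}‖ ≤ √c e^{-βt}` and `‖P t‖ ≤ ½ M₁ ‖HᵀH‖ e^{-βt}`.
Duhamel's formula `x_t = e^{tL} x₀ + ∫₀ᵗ e^{(t-s)L} P_s x_s ds` then shows that `u t = e^{βt} |x_t|`
satisfies `u t ≤ √c |x₀| + ∫₀ᵗ √c ‖P s‖ u s ds`, and Grönwall's inequality bounds `u` by
`√c |x₀| exp (∫₀^∞ √c ‖P s‖ ds) ≤ √c |x₀| exp (√c M₁ ‖HᵀH‖ / (2β))`.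
-/

open Matrix Real

attribute [local instance] Matrix.frobeniusNormedAddCommGroup Matrix.frobeniusNormedSpace

/-- The spectral (ℓ²-operator) norm of a real square matrix. -/
noncomputable def specNorm {d : ℕ} (M : Matrix (Fin d) (Fin d) ℝ) : ℝ :=
  ‖(Matrix.toEuclideanCLM (𝕜 := ℝ) M : EuclideanSpace ℝ (Fin d) →L[ℝ] EuclideanSpace ℝ (Fin d))‖

theorem le_mul_exp_integral_of_le_add_integral {u a : ℝ → ℝ} {C : ℝ} (hu : Continuous u)
    (ha : Continuous a) (ha_nonneg : ∀ s, 0 ≤ s → 0 ≤ a s)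
    (hle : ∀ t, 0 ≤ t → u t ≤ C + ∫ s in (0:ℝ)..t, a s * u s) :
    ∀ t, 0 ≤ t → u t ≤ C * exp (∫ s in (0:ℝ)..t, a s) := by
  set Φ : ℝ → ℝ := fun t => C + ∫ s in (0:ℝ)..t, a s * u s
  set A : ℝ → ℝ := fun t => ∫ s in (0:ℝ)..t, a s
  have hΦ : ∀ t, HasDerivAt Φ (a t * u t) t := fun t =>
    ((ha.mul hu).integral_hasStrictDerivAt 0 t).hasDerivAt.const_add C
  have hA : ∀ t, HasDerivAt A (a t) t := fun t =>
    (ha.integral_hasStrictDerivAt 0 t).hasDerivAt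
  have hΨ : ∀ t, HasDerivAt (fun t => Φ t * exp (-A t))
      (a t * exp (-A t) * (u t - Φ t)) t := fun t => by
    refine ((hΦ t).mul (hA t).neg.exp).congr_deriv ?_
    simp only [Pi.neg_apply]
    ring
  have hanti : AntitoneOn (fun t => Φ t * exp (-A t)) (Set.Ici 0) := by
    refine antitoneOn_of_deriv_nonpos (convex_Ici 0)
      (fun t _ => (hΨ t).continuousAt.continuousWithinAt)
      (fun t _ => (hΨ t).differentiableAt.differentiableWithinAt) fun t ht => ?_
    rw [interior_Ici] at ht
    rw [(hΨ t).deriv]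
    exact mul_nonpos_of_nonneg_of_nonpos (mul_nonneg (ha_nonneg t ht.le) (exp_pos _).le)
      (sub_nonpos.2 (hle t ht.le))
  intro t ht
  have h0 : Φ t * exp (-A t) ≤ C := by
    simpa [Φ, A] using hanti Set.self_mem_Ici ht ht
  calc u t ≤ Φ t := hle t ht
    _ = Φ t * exp (-A t) * exp (A t) := by rw [mul_assoc, ← Real.exp_add]; simp
    _ ≤ C * exp (A t) := by gcongr

theorem integral_exp_neg_mul_le {β : ℝ} (hβ : 0 < β) (t : ℝ) :
    ∫ s in (0:ℝ)..t, exp (-β * s) ≤ 1 / β := by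
  have hderiv : ∀ s ∈ Set.uIcc 0 t, HasDerivAt (fun s => -exp (-β * s) / β) (exp (-β * s)) s :=
    fun s _ => by
      refine ((((hasDerivAt_id s).const_mul (-β)).exp.neg).div_const β).congr_deriv ?_
      field_simp
      simp
  rw [intervalIntegral.integral_eq_sub_of_hasDerivAt hderiv
    ((continuous_const.mul continuous_id).rexp.intervalIntegrable 0 t)]
  have : 0 < exp (-β * t) / β := by positivity
  simp only [mul_zero, exp_zero]
  linarith [neg_div β (exp (-β * t)), neg_div β 1]

section Duhamel

variable {E : Type*} [NormedAddCommGroup E] [NormedSpace ℝ E] [CompleteSpace E]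

theorem hasDerivAt_exp_sub_smul (L : E →L[ℝ] E) (t s : ℝ) :
    HasDerivAt (fun s : ℝ => NormedSpace.exp ((t - s) • L))
      (-(NormedSpace.exp ((t - s) • L) * L)) s := by
  simpa [Function.comp_def] using
    (hasDerivAt_exp_smul_const (𝕂 := ℝ) L (t - s)).scomp s ((hasDerivAt_id s).const_sub t)

theorem continuous_exp_sub_smul (L : E →L[ℝ] E) (t : ℝ) :
    Continuous fun s : ℝ => NormedSpace.exp ((t - s) • L) :=
  continuous_iff_continuousAt.2 fun s => (hasDerivAt_exp_sub_smul L t s).continuousAt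

theorem eq_exp_smul_apply_add_integral {L : E →L[ℝ] E} {x f : ℝ → E} (hf : Continuous f)
    (hx : ∀ s, HasDerivAt x (L (x s) + f s) s) (t : ℝ) :
    x t = NormedSpace.exp (t • L) (x 0) +
      ∫ s in (0:ℝ)..t, NormedSpace.exp ((t - s) • L) (f s) := by
  have hG : ∀ s, HasDerivAt (fun s => NormedSpace.exp ((t - s) • L) (x s))
      (NormedSpace.exp ((t - s) • L) (f s)) s := fun s => by
    refine ((hasDerivAt_exp_sub_smul L t s).clm_apply (hx s)).congr_deriv ?_
    rw [map_add, _root_.neg_apply, mul_apply_eq_comp]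
    abel
  have hcont : Continuous fun s => NormedSpace.exp ((t - s) • L) (f s) :=
    (continuous_exp_sub_smul L t).clm_apply hf
  rw [intervalIntegral.integral_eq_sub_of_hasDerivAt (fun s _ => hG s)
    (hcont.intervalIntegrable 0 t)]
  simp

theorem exp_mul_norm_le_add_integral {L : E →L[ℝ] E} {P : ℝ → E →L[ℝ] E} {x : ℝ → E}
    {M k β : ℝ} (hP : Continuous P)
    (hL : ∀ t, 0 ≤ t → ‖NormedSpace.exp (t • L)‖ ≤ M * exp (-β * t))
    (hPk : ∀ t, 0 ≤ t → ‖P t‖ ≤ k * exp (-β * t))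
    (hx : ∀ t, HasDerivAt x ((L + P t) (x t)) t) {t : ℝ} (ht : 0 ≤ t) :
    exp (β * t) * ‖x t‖ ≤
      M * ‖x 0‖ + ∫ s in (0:ℝ)..t, M * k * exp (-β * s) * (exp (β * s) * ‖x s‖) := by
  have hM : 0 ≤ M := by simpa using (norm_nonneg _).trans (hL 0 le_rfl)
  have hxc : Continuous x := continuous_iff_continuousAt.2 fun s => (hx s).continuousAt
  have hduhamel := eq_exp_smul_apply_add_integral (hP.clm_apply hxc) (fun s => hx s) t
  have hintegrand : ∀ s ∈ Set.Icc 0 t, ‖NormedSpace.exp ((t - s) • L) (P s (x s))‖ ≤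
      exp (-β * t) * (M * k * exp (-β * s) * (exp (β * s) * ‖x s‖)) := fun s ⟨hs, hst⟩ =>
    calc ‖NormedSpace.exp ((t - s) • L) (P s (x s))‖
        ≤ ‖NormedSpace.exp ((t - s) • L)‖ * (‖P s‖ * ‖x s‖) :=
          (ContinuousLinearMap.le_opNorm _ _).trans (by gcongr; exact (P s).le_opNorm _)
      _ ≤ M * exp (-β * (t - s)) * (k * exp (-β * s) * ‖x s‖) := by
          gcongr
          · exact hL _ (sub_nonneg.2 hst)
          · exact hPk s hs
      _ = exp (-β * t) * (M * k * exp (-β * s) * (exp (β * s) * ‖x s‖)) := by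
          have : exp (-β * (t - s)) = exp (-β * t) * exp (β * s) := by
            rw [← exp_add]; ring_nf
          rw [this]; ring
  have hintegral : ‖∫ s in (0:ℝ)..t, NormedSpace.exp ((t - s) • L) (P s (x s))‖ ≤
      exp (-β * t) * ∫ s in (0:ℝ)..t, M * k * exp (-β * s) * (exp (β * s) * ‖x s‖) := by
    rw [← intervalIntegral.integral_const_mul]
    refine (intervalIntegral.norm_integral_le_integral_norm ht).trans
      (intervalIntegral.integral_mono_on ht ?_ ?_ hintegrand)
    · exact ((continuous_exp_sub_smul L t).clm_apply (hP.clm_apply hxc)).norm.intervalIntegrable _ _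
    · exact (by fun_prop : Continuous _).intervalIntegrable _ _
  have hnorm : ‖x t‖ ≤ exp (-β * t) *
      (M * ‖x 0‖ + ∫ s in (0:ℝ)..t, M * k * exp (-β * s) * (exp (β * s) * ‖x s‖)) := by
    rw [hduhamel, mul_add]
    refine (norm_add_le _ _).trans (add_le_add ?_ hintegral)
    calc ‖NormedSpace.exp (t • L) (x 0)‖ ≤ ‖NormedSpace.exp (t • L)‖ * ‖x 0‖ :=
          ContinuousLinearMap.le_opNorm _ _
      _ ≤ M * exp (-β * t) * ‖x 0‖ := by gcongr; exact hL t ht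
      _ = exp (-β * t) * (M * ‖x 0‖) := by ring
  calc exp (β * t) * ‖x t‖
      ≤ exp (β * t) * (exp (-β * t) *
        (M * ‖x 0‖ + ∫ s in (0:ℝ)..t, M * k * exp (-β * s) * (exp (β * s) * ‖x s‖))) := by
        gcongr
    _ = _ := by rw [← mul_assoc, ← exp_add]; simp

theorem norm_le_mul_exp_neg_mul_of_hasDerivAt {L : E →L[ℝ] E} {P : ℝ → E →L[ℝ] E} {x : ℝ → E}
    {M k β : ℝ} (hβ : 0 < β) (hP : Continuous P)
    (hL : ∀ t, 0 ≤ t → ‖NormedSpace.exp (t • L)‖ ≤ M * exp (-β * t))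
    (hPk : ∀ t, 0 ≤ t → ‖P t‖ ≤ k * exp (-β * t))
    (hx : ∀ t, HasDerivAt x ((L + P t) (x t)) t) {t : ℝ} (ht : 0 ≤ t) :
    ‖x t‖ ≤ M * exp (M * k / β) * exp (-β * t) * ‖x 0‖ := by
  have hM : 0 ≤ M := by simpa using (norm_nonneg _).trans (hL 0 le_rfl)
  have hk : 0 ≤ k := by simpa using (norm_nonneg _).trans (hPk 0 le_rfl)
  have hxc : Continuous x := continuous_iff_continuousAt.2 fun s => (hx s).continuousAt
  have hgronwall := le_mul_exp_integral_of_le_add_integral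
    (u := fun s => exp (β * s) * ‖x s‖) (a := fun s => M * k * exp (-β * s))
    (by fun_prop) (by fun_prop) (fun s _ => by positivity)
    (fun s hs => exp_mul_norm_le_add_integral hP hL hPk hx hs) t ht
  have hexponent : ∫ s in (0:ℝ)..t, M * k * exp (-β * s) ≤ M * k / β := by
    rw [intervalIntegral.integral_const_mul, ← mul_one_div]
    gcongr
    exact integral_exp_neg_mul_le hβ t
  calc ‖x t‖ = exp (-β * t) * (exp (β * t) * ‖x t‖) := by rw [← mul_assoc, ← exp_add]; simp
    _ ≤ exp (-β * t) * (M * ‖x 0‖ * exp (∫ s in (0:ℝ)..t, M * k * exp (-β * s))) :=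
      mul_le_mul_of_nonneg_left hgronwall (exp_pos _).le
    _ ≤ exp (-β * t) * (M * ‖x 0‖ * exp (M * k / β)) := by gcongr
    _ = M * exp (M * k / β) * exp (-β * t) * ‖x 0‖ := by ring

end Duhamel

section EuclideanCLM

attribute [local instance] Matrix.frobeniusNormedRing Matrix.frobeniusNormedAlgebra

variable {n : Type*} [Fintype n] [DecidableEq n]

theorem continuous_toEuclideanCLM :
    Continuous (Matrix.toEuclideanCLM (n := n) (𝕜 := ℝ)) :=
  (Matrix.toEuclideanCLM (n := n) (𝕜 := ℝ)).toAlgEquiv.toLinearMap.continuous_of_finiteDimensional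

theorem toEuclideanCLM_exp (M : Matrix n n ℝ) :
    Matrix.toEuclideanCLM (𝕜 := ℝ) (NormedSpace.exp M) =
      NormedSpace.exp (Matrix.toEuclideanCLM (𝕜 := ℝ) M) :=
  NormedSpace.map_exp_of_mem_ball (𝕂 := ℝ) _ continuous_toEuclideanCLM M <|
    (NormedSpace.expSeries_radius_eq_top ℝ (Matrix n n ℝ)).symm ▸ edist_lt_top _ _

end EuclideanCLM

theorem stmt2_general {d m : ℕ}
    (A : Matrix (Fin d) (Fin d) ℝ) (H : Matrix (Fin m) (Fin d) ℝ)
    (Sinf : Matrix (Fin d) (Fin d) ℝ)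
    (S : ℝ → Matrix (Fin d) (Fin d) ℝ) (hScont : Continuous S)
    (M₁ β c : ℝ) (hβ : 0 < β)
    (hSbound : ∀ t : ℝ, 0 ≤ t → specNorm (S t - Sinf) ≤ M₁ * Real.exp (-β * t))
    (hexp : ∀ t : ℝ, 0 ≤ t →
      specNorm (NormedSpace.exp (t • (A - (1/2 : ℝ) • (Sinf * Hᵀ * H)))) ≤
        Real.sqrt c * Real.exp (-β * t))
    (x : ℝ → EuclideanSpace ℝ (Fin d))
    (hx : ∀ t : ℝ, HasDerivAt x
      (Matrix.toEuclideanCLM (𝕜 := ℝ) (A - (1/2 : ℝ) • (S t * Hᵀ * H)) (x t)) t) :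
    ∀ t : ℝ, 0 ≤ t →
      ‖x t‖ ≤ Real.sqrt c * Real.exp (Real.sqrt c * M₁ * specNorm (Hᵀ * H) / (2 * β)) *
        Real.exp (-β * t) * ‖x 0‖ := by
  set T := Matrix.toEuclideanCLM (n := Fin d) (𝕜 := ℝ)
  set P : ℝ → EuclideanSpace ℝ (Fin d) →L[ℝ] EuclideanSpace ℝ (Fin d) :=
    fun t => T ((-(1/2) : ℝ) • ((S t - Sinf) * (Hᵀ * H)))
  have hsplit : ∀ t, T (A - (1/2 : ℝ) • (S t * Hᵀ * H)) =
      T (A - (1/2 : ℝ) • (Sinf * Hᵀ * H)) + P t := fun t => by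
    rw [← map_add, Matrix.sub_mul, Matrix.mul_assoc, Matrix.mul_assoc]
    congr 1
    module
  have hP : Continuous P := continuous_toEuclideanCLM.comp (by fun_prop)
  have hPk : ∀ t, 0 ≤ t → ‖P t‖ ≤ M₁ * specNorm (Hᵀ * H) / 2 * Real.exp (-β * t) := by
    intro t ht
    calc ‖P t‖ = 1 / 2 * ‖T (S t - Sinf) * T (Hᵀ * H)‖ := by
          simp only [P, map_smul, map_mul, norm_smul, norm_neg]
          norm_num
      _ ≤ 1 / 2 * (specNorm (S t - Sinf) * specNorm (Hᵀ * H)) := by gcongr; exact norm_mul_le _ _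
      _ ≤ 1 / 2 * (M₁ * Real.exp (-β * t) * specNorm (Hᵀ * H)) := by
          gcongr
          · exact norm_nonneg _
          · exact hSbound t ht
      _ = M₁ * specNorm (Hᵀ * H) / 2 * Real.exp (-β * t) := by ring
  have hL : ∀ t : ℝ, 0 ≤ t → ‖NormedSpace.exp (t • T (A - (1/2 : ℝ) • (Sinf * Hᵀ * H)))‖ ≤
      Real.sqrt c * Real.exp (-β * t) := fun t ht => by
    simpa only [specNorm, toEuclideanCLM_exp, map_smul] using hexp t ht
  intro t ht
  convert norm_le_mul_exp_neg_mul_of_hasDerivAt hβ hP hL hPk (fun t => hsplit t ▸ hx t) ht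
    using 5
  ring

/-- stability of the perturbed square-root Riccati flow.
If `ẋ = (A - ½ Σ_t Hᵀ H) x`, with `‖Σ_t - Σ∞‖₂ ≤ M₁ e^{-βt}` and
`‖e^{t(A - ½ Σ∞ Hᵀ H)}‖₂ ≤ √c e^{-βt}` for `t ≥ 0`, `c ≥ 1`, then
`|x_t| ≤ α e^{-βt}|x₀|` with `α = √c · e^{√c M₁ ‖Hᵀ H‖₂/(2β)}`. -/
theorem stmt2 {d m : ℕ}
    (A : Matrix (Fin d) (Fin d) ℝ) (H : Matrix (Fin m) (Fin d) ℝ)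
    (Sinf : Matrix (Fin d) (Fin d) ℝ) (hSinf : Sinf.PosDef)
    (S : ℝ → Matrix (Fin d) (Fin d) ℝ) (hScont : Continuous S)
    (hSpos : ∀ t : ℝ, (S t).PosDef)
    (M₁ β c : ℝ) (hM₁ : 0 < M₁) (hβ : 0 < β) (hc : 1 ≤ c)
    (hSbound : ∀ t : ℝ, 0 ≤ t → specNorm (S t - Sinf) ≤ M₁ * Real.exp (-β * t))
    (hexp : ∀ t : ℝ, 0 ≤ t →
      specNorm (NormedSpace.exp (t • (A - (1/2 : ℝ) • (Sinf * Hᵀ * H)))) ≤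
        Real.sqrt c * Real.exp (-β * t))
    (x : ℝ → EuclideanSpace ℝ (Fin d))
    (hx : ∀ t : ℝ, HasDerivAt x
      (Matrix.toEuclideanCLM (𝕜 := ℝ) (A - (1/2 : ℝ) • (S t * Hᵀ * H)) (x t)) t) :
    ∀ t : ℝ, 0 ≤ t →
      ‖x t‖ ≤ Real.sqrt c * Real.exp (Real.sqrt c * M₁ * specNorm (Hᵀ * H) / (2 * β)) *
        Real.exp (-β * t) * ‖x 0‖ :=
  stmt2_general A H Sinf S hScont M₁ β c hβ hSbound hexp x hx
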